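/- arXiv:1412.5061 — 3 statements merged into one kernel-verified Lean document; each statement's English description precedes it below -/
import Mathlib

section
/- For any u ∈ ℂ⁴, ⟨βu,u⟩² + Σ_{k=1}^{3} ⟨αₖu,u⟩² ≤ |u|⁴_{ℂ⁴} (note that ⟨βu,u⟩ and ⟨αₖu,u⟩ are real since β, αₖ are Hermitian). -/
/-! Write `u = (φ, χ)` with upper and lower spinors `φ, χ ∈ ℂ²`. Then `⟨βu,u⟩ = |φ|² - |χ|²` and,
the `σₖ` being Hermitian, `⟨αₖu,u⟩ = 2 Re ⟨σₖχ, φ⟩`. For the real inner product `Re ⟨·,·⟩` on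
`ℂ² ≅ ℝ⁴` the vectors `σ₁χ, σ₂χ, σ₃χ, iχ` are pairwise orthogonal of length `|χ|` (the Pauli
matrices anticommute and square to `1`), so by Parseval
`∑ₖ (Re ⟨σₖχ, φ⟩)² + (Re ⟨iχ, φ⟩)² = |χ|² |φ|²`. Hence the left-hand side is at most
`(|φ|² - |χ|²)² + 4 |φ|² |χ|² = (|φ|² + |χ|²)² = |u|⁴`. -/

open Matrix

noncomputable def PauliMat : Fin 3 → Matrix (Fin 2) (Fin 2) ℂ
  | 0 => !![0, 1; 1, 0]
  | 1 => !![0, -Complex.I; Complex.I, 0]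
  | 2 => !![1, 0; 0, -1]

/-- β = [[I,0],[0,-I]] as a 4×4 matrix. -/
noncomputable def DiracBeta : Matrix (Fin 4) (Fin 4) ℂ :=
  (Matrix.reindex (finSumFinEquiv : Fin 2 ⊕ Fin 2 ≃ Fin 4) (finSumFinEquiv : Fin 2 ⊕ Fin 2 ≃ Fin 4))
    (Matrix.fromBlocks (1 : Matrix (Fin 2) (Fin 2) ℂ) 0 0 (-1))

/-- αₖ = [[0,σₖ],[σₖ,0]] as a 4×4 matrix. -/
noncomputable def DiracAlpha (k : Fin 3) : Matrix (Fin 4) (Fin 4) ℂ :=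
  (Matrix.reindex (finSumFinEquiv : Fin 2 ⊕ Fin 2 ≃ Fin 4) (finSumFinEquiv : Fin 2 ⊕ Fin 2 ≃ Fin 4))
    (Matrix.fromBlocks 0 (PauliMat k) (PauliMat k) 0)

/-- Hermitian inner product ⟨w, u⟩ = ∑ wᵢ ūᵢ on ℂ⁴. -/
noncomputable def hdot (w u : Fin 4 → ℂ) : ℂ := ∑ i, w i * starRingEnd ℂ (u i)

section BlockMatrix

variable {m n p R : Type*} [Fintype m] [Fintype n] [Fintype p] [NonUnitalNonAssocSemiring R]

theorem reindex_fromBlocks_mulVec_dotProduct (e : m ⊕ n ≃ p) (A : Matrix m m R)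
    (B : Matrix m n R) (C : Matrix n m R) (D : Matrix n n R) (u w : p → R) :
    reindex e e (fromBlocks A B C D) *ᵥ u ⬝ᵥ w =
      (A *ᵥ (u ∘ e ∘ Sum.inl) + B *ᵥ (u ∘ e ∘ Sum.inr)) ⬝ᵥ (w ∘ e ∘ Sum.inl)
        + (C *ᵥ (u ∘ e ∘ Sum.inl) + D *ᵥ (u ∘ e ∘ Sum.inr)) ⬝ᵥ (w ∘ e ∘ Sum.inr) := by
  rw [reindex_apply, submatrix_mulVec_equiv, dotProduct, ← e.sum_comp, Fintype.sum_sum_type]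
  simp [fromBlocks_mulVec, dotProduct, Function.comp_def]

end BlockMatrix

theorem Matrix.IsHermitian.mulVec_dotProduct_star_comm {n R : Type*} [Fintype n] [CommSemiring R]
    [StarRing R] {A : Matrix n n R} (hA : A.IsHermitian) (x y : n → R) :
    A *ᵥ y ⬝ᵥ star x = star (A *ᵥ x ⬝ᵥ star y) := by
  rw [dotProduct_comm, dotProduct_mulVec, ← hA.eq, ← star_mulVec, star_dotProduct,
    dotProduct_comm, hA.eq]

theorem re_dotProduct_star_self {n : Type*} [Fintype n] (v : n → ℂ) :
    (v ⬝ᵥ star v).re = ∑ i, ‖v i‖ ^ 2 := by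
  simp [dotProduct, Complex.re_sum, Complex.mul_conj', ← Complex.ofReal_pow]

theorem pauliMat_isHermitian (k : Fin 3) : (PauliMat k).IsHermitian := by
  fin_cases k <;> ext i j <;> fin_cases i <;> fin_cases j <;> simp [PauliMat]

theorem pauliMat_parseval (φ χ : Fin 2 → ℂ) :
    ∑ k, (PauliMat k *ᵥ χ ⬝ᵥ star φ).re ^ 2 + ((Complex.I • χ) ⬝ᵥ star φ).re ^ 2
      = (∑ i, ‖χ i‖ ^ 2) * ∑ i, ‖φ i‖ ^ 2 := by
  simp only [dotProduct, mulVec, PauliMat, Fin.sum_univ_succ, Fin.isValue, Finset.univ_unique,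
    Fin.default_eq_zero, Finset.sum_singleton, Fin.succ_zero_eq_one, Fin.succ_one_eq_two,
    Pi.star_apply, Pi.smul_apply, smul_eq_mul, RCLike.star_def, of_apply, cons_val',
    cons_val_zero, cons_val_one, cons_val_fin_one, Complex.add_re, Complex.add_im,
    Complex.mul_re, Complex.mul_im, Complex.conj_re, Complex.conj_im, Complex.neg_re,
    Complex.neg_im, Complex.zero_re, Complex.zero_im, Complex.one_re, Complex.one_im,
    Complex.I_re, Complex.I_im, Complex.sq_norm, Complex.normSq_apply]
  ring

theorem sum_re_pauliMat_mulVec_dotProduct_sq_le (φ χ : Fin 2 → ℂ) :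
    ∑ k, (PauliMat k *ᵥ χ ⬝ᵥ star φ).re ^ 2 ≤ (∑ i, ‖χ i‖ ^ 2) * ∑ i, ‖φ i‖ ^ 2 := by
  rw [← pauliMat_parseval]
  exact le_add_of_nonneg_right (sq_nonneg _)

def upperSpinor (u : Fin 4 → ℂ) : Fin 2 → ℂ :=
  u ∘ (finSumFinEquiv : Fin 2 ⊕ Fin 2 ≃ Fin 4) ∘ Sum.inl

def lowerSpinor (u : Fin 4 → ℂ) : Fin 2 → ℂ :=
  u ∘ (finSumFinEquiv : Fin 2 ⊕ Fin 2 ≃ Fin 4) ∘ Sum.inr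

section Dirac

variable (u : Fin 4 → ℂ)

theorem hdot_reindex_fromBlocks_mulVec (A B C D : Matrix (Fin 2) (Fin 2) ℂ) :
    hdot (reindex finSumFinEquiv finSumFinEquiv (fromBlocks A B C D) *ᵥ u) u
      = (A *ᵥ upperSpinor u + B *ᵥ lowerSpinor u) ⬝ᵥ star (upperSpinor u)
        + (C *ᵥ upperSpinor u + D *ᵥ lowerSpinor u) ⬝ᵥ star (lowerSpinor u) :=
  reindex_fromBlocks_mulVec_dotProduct _ _ _ _ _ _ _

theorem re_hdot_diracBeta_mulVec :
    (hdot (DiracBeta *ᵥ u) u).re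
      = ∑ i, ‖upperSpinor u i‖ ^ 2 - ∑ i, ‖lowerSpinor u i‖ ^ 2 := by
  rw [DiracBeta, hdot_reindex_fromBlocks_mulVec]
  simp only [one_mulVec, zero_mulVec, neg_mulVec, add_zero, zero_add, neg_dotProduct,
    Complex.add_re, Complex.neg_re, re_dotProduct_star_self]
  ring

theorem re_hdot_diracAlpha_mulVec (k : Fin 3) :
    (hdot (DiracAlpha k *ᵥ u) u).re
      = 2 * (PauliMat k *ᵥ lowerSpinor u ⬝ᵥ star (upperSpinor u)).re := by
  rw [DiracAlpha, hdot_reindex_fromBlocks_mulVec]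
  simp only [zero_mulVec, zero_add, add_zero]
  rw [(pauliMat_isHermitian k).mulVec_dotProduct_star_comm, Complex.add_re, Complex.star_def,
    Complex.conj_re, two_mul]

theorem sum_norm_sq_eq_upperSpinor_add_lowerSpinor :
    ∑ i, ‖u i‖ ^ 2 = ∑ i, ‖upperSpinor u i‖ ^ 2 + ∑ i, ‖lowerSpinor u i‖ ^ 2 := by
  rw [← (finSumFinEquiv : Fin 2 ⊕ Fin 2 ≃ Fin 4).sum_comp, Fintype.sum_sum_type]
  rfl

end Dirac

theorem dirac_quadratic_forms_estimate (u : Fin 4 → ℂ) :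
    (hdot (DiracBeta.mulVec u) u).re ^ 2
      + ∑ k : Fin 3, (hdot ((DiracAlpha k).mulVec u) u).re ^ 2
      ≤ (∑ i, ‖u i‖ ^ 2) ^ 2 := by
  have bessel := sum_re_pauliMat_mulVec_dotProduct_sq_le (upperSpinor u) (lowerSpinor u)
  simp only [re_hdot_diracBeta_mulVec, re_hdot_diracAlpha_mulVec,
    sum_norm_sq_eq_upperSpinor_add_lowerSpinor, mul_pow, ← Finset.mul_sum]
  nlinarith
end

section
/- Defining J₀(u) = |u|²_{ℂ⁴} and Jₖ(u) = ⟨αₖu,u⟩ for k=1,2,3, for all u, v ∈ ℂ⁴ one has J₀(u)·J₀(v) − Σ_{k=1}^{3} Jₖ(u)·Jₖ(v) ≥ 0. -/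
/-!
The current `(J₀, J)` of a spinor is a causal vector: by the Fierz identity
`J₀² - |J|² = S² + P²`, with `S = ⟨βu, u⟩` the scalar and `P` the pseudoscalar bilinear.
The Minkowski product of two future-directed causal vectors is nonnegative, since
by Cauchy–Schwarz `J(u) · J(v) ≤ |J(u)| |J(v)| ≤ J₀(u) J₀(v)`.
-/

open Matrix

/-- J₀(u) = |u|². -/
noncomputable def J0 (u : Fin 4 → ℂ) : ℝ := ∑ i, ‖u i‖ ^ 2

/-- Jₖ(u) = ⟨αₖu, u⟩ (a real number since αₖ is Hermitian). -/
noncomputable def Jk (k : Fin 3) (u : Fin 4 → ℂ) : ℝ :=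
  (hdot ((DiracAlpha k).mulVec u) u).re

open ComplexConjugate

theorem Finset.sum_mul_le_mul_of_sum_sq_le {ι : Type*} (s : Finset ι) {x y : ι → ℝ} {a b : ℝ}
    (ha : 0 ≤ a) (hb : 0 ≤ b) (hx : ∑ i ∈ s, x i ^ 2 ≤ a ^ 2) (hy : ∑ i ∈ s, y i ^ 2 ≤ b ^ 2) :
    ∑ i ∈ s, x i * y i ≤ a * b :=
  calc ∑ i ∈ s, x i * y i
      ≤ √(∑ i ∈ s, x i ^ 2) * √(∑ i ∈ s, y i ^ 2) := Real.sum_mul_le_sqrt_mul_sqrt s x y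
    _ ≤ √(a ^ 2) * √(b ^ 2) := by gcongr
    _ = a * b := by rw [Real.sqrt_sq ha, Real.sqrt_sq hb]

theorem DiracAlpha_zero : DiracAlpha 0 = !![0, 0, 0, 1; 0, 0, 1, 0; 0, 1, 0, 0; 1, 0, 0, 0] := by
  ext i j
  fin_cases i <;> fin_cases j <;> simp [DiracAlpha, PauliMat, fromBlocks, finSumFinEquiv, Fin.addCases]

theorem DiracAlpha_one : DiracAlpha 1 =
    !![0, 0, 0, -Complex.I; 0, 0, Complex.I, 0; 0, -Complex.I, 0, 0; Complex.I, 0, 0, 0] := by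
  ext i j
  fin_cases i <;> fin_cases j <;> simp [DiracAlpha, PauliMat, fromBlocks, finSumFinEquiv, Fin.addCases]

theorem DiracAlpha_two : DiracAlpha 2 = !![0, 0, 1, 0; 0, 0, 0, -1; 1, 0, 0, 0; 0, -1, 0, 0] := by
  ext i j
  fin_cases i <;> fin_cases j <;> simp [DiracAlpha, PauliMat, fromBlocks, finSumFinEquiv, Fin.addCases]

theorem Jk_zero (u : Fin 4 → ℂ) : Jk 0 u = 2 * (conj (u 0) * u 3 + conj (u 1) * u 2).re := by
  rw [Jk, hdot, DiracAlpha_zero]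
  simp only [mulVec, dotProduct, Fin.sum_univ_four, of_apply, cons_val', cons_val_fin_one,
    cons_val_zero, cons_val_one, cons_val, zero_mul, one_mul, add_zero, zero_add, Complex.add_re,
    Complex.mul_re, Complex.conj_re, Complex.conj_im]
  ring

theorem Jk_one (u : Fin 4 → ℂ) : Jk 1 u = 2 * (conj (u 0) * u 3 - conj (u 1) * u 2).im := by
  rw [Jk, hdot, DiracAlpha_one]
  simp only [mulVec, dotProduct, Fin.sum_univ_four, of_apply, cons_val', cons_val_fin_one,
    cons_val_zero, cons_val_one, cons_val, zero_mul, neg_mul, add_zero, zero_add, Complex.add_re,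
    Complex.neg_re, Complex.sub_im, Complex.mul_re, Complex.mul_im, Complex.I_re, Complex.I_im,
    Complex.conj_re, Complex.conj_im]
  ring

theorem Jk_two (u : Fin 4 → ℂ) : Jk 2 u = 2 * (conj (u 0) * u 2 - conj (u 1) * u 3).re := by
  rw [Jk, hdot, DiracAlpha_two]
  simp only [mulVec, dotProduct, Fin.sum_univ_four, of_apply, cons_val', cons_val_fin_one,
    cons_val_zero, cons_val_one, cons_val, zero_mul, one_mul, neg_mul, add_zero, zero_add,
    Complex.add_re, Complex.neg_re, Complex.sub_re, Complex.mul_re, Complex.conj_re, Complex.conj_im]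
  ring

theorem J0_eq_sum_normSq (u : Fin 4 → ℂ) : J0 u = ∑ i, Complex.normSq (u i) := by
  simp only [J0, Complex.sq_norm]

theorem J0_nonneg (u : Fin 4 → ℂ) : 0 ≤ J0 u := by
  unfold J0
  positivity

theorem J0_sq_sub_sum_Jk_sq (u : Fin 4 → ℂ) :
    J0 u ^ 2 - ∑ k, Jk k u ^ 2 =
      (Complex.normSq (u 0) + Complex.normSq (u 1) - Complex.normSq (u 2) - Complex.normSq (u 3)) ^ 2
        + 4 * (conj (u 0) * u 2 + conj (u 1) * u 3).im ^ 2 := by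
  rw [J0_eq_sum_normSq, Fin.sum_univ_four, Fin.sum_univ_three, Jk_zero, Jk_one, Jk_two]
  simp only [Complex.normSq_apply, Complex.add_re, Complex.add_im, Complex.sub_re, Complex.sub_im,
    Complex.mul_re, Complex.mul_im, Complex.conj_re, Complex.conj_im]
  ring

theorem sum_Jk_sq_le_J0_sq (u : Fin 4 → ℂ) : ∑ k, Jk k u ^ 2 ≤ J0 u ^ 2 :=
  sub_nonneg.mp (by rw [J0_sq_sub_sum_Jk_sq]; positivity)

theorem current_nonneg (u v : Fin 4 → ℂ) :
    0 ≤ J0 u * J0 v - ∑ k : Fin 3, Jk k u * Jk k v := by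
  have := Finset.univ.sum_mul_le_mul_of_sum_sq_le (J0_nonneg u) (J0_nonneg v)
    (sum_Jk_sq_le_J0_sq u) (sum_Jk_sq_le_J0_sq v)
  linarith
end

section
/- Let a > |ω| ≥ 0, set c₀ = √(a² − ω²), and let R > 0, C'' > 0. Suppose w : ℝ³ → [0,∞) is continuous, C² on {|x| > R}, satisfies Δw ≥ (a² − ω²)w on {|x| > R}, w(x) → 0 as |x| → ∞, and w(x) ≤ C'' e^{−c₀|x|} on {|x| = R}. Then w(x) ≤ C'' e^{−c₀|x|} for all |x| ≥ R. -/
open Filter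

/-- Laplacian Δf = ∑ₖ ∂ₖ∂ₖ f on euclidean ℝ³. -/
noncomputable def lapE (f : EuclideanSpace ℝ (Fin 3) → ℝ) :
    EuclideanSpace ℝ (Fin 3) → ℝ :=
  fun x => ∑ k : Fin 3,
    fderiv ℝ (fun y => fderiv ℝ f y (EuclideanSpace.single k (1:ℝ))) x
      (EuclideanSpace.single k (1:ℝ))

/-!
Compare `w` with the barrier `v x = C'' e^{-c₀‖x‖}`, `c₀ = √(a² - ω²)`. Away from the origin the
radial Laplacian `g'' + 2g'/r` gives `Δv = (c₀² - 2c₀/‖x‖) v ≤ c₀² v`. If `w - v` were positive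
somewhere on `{‖x‖ ≥ R}`, then, being `≤ 0` on the sphere `‖x‖ = R` and `< ε` near infinity, it
would attain a positive maximum at some `z` with `‖z‖ > R`. There `Δ(w - v) ≤ 0`, whereas
`Δ(w - v) ≥ c₀² (w - v) > 0`.
-/

open Set Topology
open scoped RealInnerProductSpace

theorem IsLocalMax.le_zero_of_hasDerivAt_of_hasDerivAt {g g' : ℝ → ℝ} {x G : ℝ}
    (hmax : IsLocalMax g x) (hg : ∀ᶠ t in 𝓝 x, HasDerivAt g (g' t) t)
    (hg' : HasDerivAt g' G x) : G ≤ 0 := by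
  by_contra! hG
  have hg'x : g' x = 0 := hmax.hasDerivAt_eq_zero hg.self_of_nhds
  have hg'_pos : ∀ᶠ t in 𝓝[>] x, 0 < g' t := by
    filter_upwards [((hasDerivAt_iff_tendsto_slope.mp hg').mono_left
      (nhdsGT_le_nhdsNE x)).eventually (eventually_gt_nhds hG), self_mem_nhdsWithin] with t ht hxt
    exact pos_of_slope_pos hxt ht hg'x
  obtain ⟨b, hxb, hb⟩ := (nhdsGT_basis x).eventually_iff.mp
    (hg'_pos.and (nhdsWithin_le_nhds (hg.and hmax)))
  obtain ⟨t, hxt, htb⟩ := exists_between hxb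
  have hderiv : ∀ s ∈ Icc x t, HasDerivAt g (g' s) s := fun s hs =>
    hs.1.eq_or_lt.elim (fun h => h ▸ hg.self_of_nhds) fun h => (hb ⟨h, hs.2.trans_lt htb⟩).2.1
  obtain ⟨ξ, hξ, hslope⟩ := exists_hasDerivAt_eq_slope g g' hxt
    (fun s hs => (hderiv s hs).continuousAt.continuousWithinAt)
    (fun s hs => hderiv s (Ioo_subset_Icc_self hs))
  have hslope_pos : 0 < (g t - g x) / (t - x) := hslope ▸ (hb ⟨hξ.1, hξ.2.trans htb⟩).1
  have ht_le : g t ≤ g x := (hb ⟨hxt, htb⟩).2.2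
  exact (div_pos_iff_of_pos_right (sub_pos.mpr hxt)).mp hslope_pos |>.not_ge (sub_nonpos.mpr ht_le)

theorem IsLocalMax.fderiv_fderiv_apply_self_nonpos {E : Type*} [NormedAddCommGroup E]
    [NormedSpace ℝ E] {f : E → ℝ} {x : E} (hmax : IsLocalMax f x) (hf : ContDiffAt ℝ 2 f x)
    (v : E) : fderiv ℝ (fun y => fderiv ℝ f y v) x v ≤ 0 := by
  let ℓ : ℝ → E := fun t => x + t • v
  have hℓ : ∀ t, HasDerivAt ℓ v t := fun t => by
    simpa only [id, one_smul] using ((hasDerivAt_id t).smul_const v).const_add x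
  have hℓ0 : ℓ 0 = x := by simp [ℓ]
  have hf' : DifferentiableAt ℝ (fun y => fderiv ℝ f y v) (ℓ 0) := by
    rw [hℓ0]
    exact ((hf.fderiv_right le_rfl).clm_apply contDiffAt_const).differentiableAt one_ne_zero
  have hmax' : IsLocalMax (f ∘ ℓ) 0 := by
    rw [← hℓ0] at hmax
    exact hmax.comp_continuous (hℓ 0).continuousAt
  have hℓ_tendsto : Tendsto ℓ (𝓝 0) (𝓝 x) := hℓ0 ▸ (hℓ 0).continuousAt
  rw [← hℓ0]
  refine hmax'.le_zero_of_hasDerivAt_of_hasDerivAt (g' := fun t => fderiv ℝ f (ℓ t) v) ?_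
    (hf'.hasFDerivAt.comp_hasDerivAt 0 (hℓ 0))
  filter_upwards [hℓ_tendsto.eventually (hf.eventually (by simp))] with t ht
  exact (ht.differentiableAt two_ne_zero).hasFDerivAt.comp_hasDerivAt t (hℓ t)

theorem exists_isLocalMax_pos_of_nonpos_on_sphere {E : Type*} [NormedAddCommGroup E]
    [ProperSpace E] {u : E → ℝ} {R : ℝ} (hu : Continuous u)
    (hu_cobounded : ∀ ε > 0, ∀ᶠ y in Bornology.cobounded E, u y < ε)
    (hu_sphere : ∀ y, ‖y‖ = R → u y ≤ 0) {x : E} (hxR : R ≤ ‖x‖) (hx : 0 < u x) :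
    ∃ z, R < ‖z‖ ∧ 0 < u z ∧ IsLocalMax u z := by
  obtain ⟨z, hzR, hz_max⟩ := hu.continuousOn.exists_isMaxOn'
    (isClosed_le continuous_const continuous_norm) hxR <| by
      rw [← Metric.cobounded_eq_cocompact]
      exact ((hu_cobounded _ hx).mono fun y hy => hy.le).filter_mono inf_le_left
  have hz : 0 < u z := hx.trans_le (hz_max hxR)
  have hzR' : R < ‖z‖ := hzR.lt_of_ne fun h => (hu_sphere z h.symm).not_gt hz
  refine ⟨z, hzR', hz, hz_max.isLocalMax ?_⟩
  exact mem_of_superset ((isOpen_lt continuous_const continuous_norm).mem_nhds hzR')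
    fun _ hy => le_of_lt (show R < _ from hy)

section InnerProductSpace

variable {E : Type*} [NormedAddCommGroup E] [InnerProductSpace ℝ E]

theorem hasFDerivAt_norm_of_ne_zero {x : E} (hx : x ≠ 0) :
    HasFDerivAt (‖·‖) (‖x‖⁻¹ • innerSL ℝ x) x := by
  have h := (hasStrictFDerivAt_norm_sq x).hasFDerivAt.sqrt (by positivity)
  simp only [Real.sqrt_sq (norm_nonneg _)] at h
  convert h using 1
  ext y
  simp only [smul_apply, coe_innerSL_apply, smul_eq_mul, one_div, mul_inv_rev, nsmul_eq_mul,
    Nat.cast_ofNat]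
  field_simp

theorem HasDerivAt.hasFDerivAt_comp_norm {g : ℝ → ℝ} {g' : ℝ} {x : E} (hx : x ≠ 0)
    (hg : HasDerivAt g g' ‖x‖) :
    HasFDerivAt (fun y => g ‖y‖) ((g' * ‖x‖⁻¹) • innerSL ℝ x) x := by
  have h := hg.comp_hasFDerivAt x (hasFDerivAt_norm_of_ne_zero hx)
  rw [smul_smul] at h
  exact h

theorem fderiv_fderiv_comp_norm_apply_self {g g' : ℝ → ℝ} {g'' : ℝ} {x : E} (hx : x ≠ 0)
    (hg : ∀ᶠ t in 𝓝 ‖x‖, HasDerivAt g (g' t) t) (hg' : HasDerivAt g' g'' ‖x‖) (e : E) :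
    fderiv ℝ (fun y => fderiv ℝ (fun z => g ‖z‖) y e) x e =
      g'' * (⟪x, e⟫ / ‖x‖) ^ 2 + g' ‖x‖ * (‖e‖ ^ 2 - (⟪x, e⟫ / ‖x‖) ^ 2) / ‖x‖ := by
  have hr : ‖x‖ ≠ 0 := norm_ne_zero_iff.mpr hx
  have hfirst : (fun y => fderiv ℝ (fun z => g ‖z‖) y e) =ᶠ[𝓝 x]
      fun y => g' ‖y‖ * (⟪e, y⟫ * ‖y‖⁻¹) := by
    filter_upwards [eventually_ne_nhds hx, continuous_norm.continuousAt.eventually hg]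
      with y hy hgy
    rw [(hgy.hasFDerivAt_comp_norm hy).fderiv, smul_apply, coe_innerSL_apply,
      real_inner_comm, smul_eq_mul]
    ring
  have hN := hasFDerivAt_norm_of_ne_zero hx
  have hsecond : HasFDerivAt (fun y => g' ‖y‖ * (⟪e, y⟫ * ‖y‖⁻¹)) _ x :=
    (hg'.comp_hasFDerivAt x hN).fun_mul
      ((innerSL ℝ e).hasFDerivAt.fun_mul ((hasDerivAt_inv hr).comp_hasFDerivAt x hN))
  rw [hfirst.fderiv_eq, hsecond.fderiv]
  simp only [Function.comp_apply, coe_innerSL_apply, real_inner_comm, neg_smul, smul_neg, smul_add,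
    add_apply, neg_apply, smul_apply, smul_eq_mul, real_inner_self_eq_norm_sq]
  field_simp
  ring

end InnerProductSpace

local notation "ℝ³" => EuclideanSpace ℝ (Fin 3)

theorem lapE_comp_norm {g g' : ℝ → ℝ} {g'' : ℝ} {x : ℝ³} (hx : x ≠ 0)
    (hg : ∀ᶠ t in 𝓝 ‖x‖, HasDerivAt g (g' t) t) (hg' : HasDerivAt g' g'' ‖x‖) :
    lapE (fun y => g ‖y‖) x = g'' + 2 * g' ‖x‖ / ‖x‖ := by
  have hr : ‖x‖ ≠ 0 := norm_ne_zero_iff.mpr hx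
  have hsum : ∑ k : Fin 3, ⟪x, EuclideanSpace.single k (1:ℝ)⟫ ^ 2 = ‖x‖ ^ 2 := by
    simp [EuclideanSpace.inner_single_right, EuclideanSpace.real_norm_sq_eq]
  simp only [lapE, fderiv_fderiv_comp_norm_apply_self hx hg hg', PiLp.norm_single, norm_one,
    one_pow, div_pow, Finset.sum_add_distrib, ← Finset.mul_sum, ← Finset.sum_div,
    Finset.sum_sub_distrib, hsum, Finset.sum_const, Finset.card_univ, Fintype.card_fin,
    nsmul_eq_mul, Nat.cast_ofNat, mul_one]
  field_simp
  ring

theorem lapE_mul_exp_neg_mul_norm (C c : ℝ) {x : ℝ³} (hx : x ≠ 0) :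
    lapE (fun y => C * Real.exp (-c * ‖y‖)) x =
      (c ^ 2 - 2 * c / ‖x‖) * (C * Real.exp (-c * ‖x‖)) := by
  have hg : ∀ t, HasDerivAt (fun t => C * Real.exp (-c * t)) (-c * (C * Real.exp (-c * t))) t :=
    fun t => by
      have h := (((hasDerivAt_id t).const_mul (-c)).exp).const_mul C
      simp only [id, mul_one] at h
      exact h.congr_deriv (by ring)
  have hg' : HasDerivAt (fun t => -c * (C * Real.exp (-c * t)))
      (c ^ 2 * (C * Real.exp (-c * ‖x‖))) ‖x‖ :=
    ((hg ‖x‖).const_mul (-c)).congr_deriv (by ring)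
  rw [lapE_comp_norm hx (.of_forall hg) hg']
  ring

theorem lapE_nonpos_of_isLocalMax {f : ℝ³ → ℝ} {x : ℝ³} (hmax : IsLocalMax f x)
    (hf : ContDiffAt ℝ 2 f x) : lapE f x ≤ 0 :=
  Finset.sum_nonpos fun _ _ => hmax.fderiv_fderiv_apply_self_nonpos hf _

theorem lapE_sub {f g : ℝ³ → ℝ} {x : ℝ³} (hf : ContDiffAt ℝ 2 f x) (hg : ContDiffAt ℝ 2 g x) :
    lapE (fun y => f y - g y) x = lapE f x - lapE g x := by
  rw [lapE, lapE, lapE, ← Finset.sum_sub_distrib]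
  refine Finset.sum_congr rfl fun k _ => ?_
  set e : ℝ³ := EuclideanSpace.single k 1
  have hf' : DifferentiableAt ℝ (fun y => fderiv ℝ f y e) x :=
    ((hf.fderiv_right le_rfl).clm_apply contDiffAt_const).differentiableAt one_ne_zero
  have hg' : DifferentiableAt ℝ (fun y => fderiv ℝ g y e) x :=
    ((hg.fderiv_right le_rfl).clm_apply contDiffAt_const).differentiableAt one_ne_zero
  have hfirst : (fun y => fderiv ℝ (fun z => f z - g z) y e) =ᶠ[𝓝 x]
      fun y => fderiv ℝ f y e - fderiv ℝ g y e := by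
    filter_upwards [hf.eventually (by simp), hg.eventually (by simp)] with y hfy hgy
    rw [fderiv_fun_sub (hfy.differentiableAt two_ne_zero) (hgy.differentiableAt two_ne_zero)]
    rfl
  rw [hfirst.fderiv_eq, fderiv_fun_sub hf' hg']
  rfl

theorem exponential_decay_comparison_general
    (a ω R C'' : ℝ) (ha : |ω| < a) (hR : 0 < R) (hC : 0 < C'')
    (w : EuclideanSpace ℝ (Fin 3) → ℝ)
    (hw_cont : Continuous w)
    (hw_C2 : ContDiffOn ℝ 2 w {x | R < ‖x‖})
    (hw_sub : ∀ x, R < ‖x‖ → (a ^ 2 - ω ^ 2) * w x ≤ lapE w x)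
    (hw_decay : Tendsto w (Bornology.cobounded _) (nhds 0))
    (hw_bdry : ∀ x, ‖x‖ = R → w x ≤ C'' * Real.exp (-(Real.sqrt (a ^ 2 - ω ^ 2)) * ‖x‖)) :
    ∀ x, R ≤ ‖x‖ → w x ≤ C'' * Real.exp (-(Real.sqrt (a ^ 2 - ω ^ 2)) * ‖x‖) := by
  intro x hxR
  by_contra! hx
  have hk : 0 < a ^ 2 - ω ^ 2 := by nlinarith [sq_abs ω, abs_nonneg ω]
  set c := Real.sqrt (a ^ 2 - ω ^ 2)
  set v : ℝ³ → ℝ := fun y => C'' * Real.exp (-c * ‖y‖)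
  have hv_nonneg : ∀ y, 0 ≤ v y := fun y => by positivity
  obtain ⟨z, hzR, hz_pos, hz_max⟩ := exists_isLocalMax_pos_of_nonpos_on_sphere
    (u := fun y => w y - v y) (hw_cont.sub (by fun_prop))
    (fun ε hε => (hw_decay.eventually (gt_mem_nhds hε)).mono fun y hy => by linarith [hv_nonneg y])
    (fun y hy => sub_nonpos.mpr (hw_bdry y hy)) hxR (sub_pos.mpr hx)
  have hz : z ≠ 0 := norm_pos_iff.mp (hR.trans hzR)
  have hw : ContDiffAt ℝ 2 w z :=
    hw_C2.contDiffAt ((isOpen_lt continuous_const continuous_norm).mem_nhds hzR)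
  have hv : ContDiffAt ℝ 2 v z :=
    contDiffAt_const.mul (Real.contDiff_exp.contDiffAt.comp z
      (contDiffAt_const.mul (contDiffAt_norm ℝ hz)))
  have hlap := lapE_nonpos_of_isLocalMax hz_max (hw.sub hv)
  rw [lapE_sub hw hv, lapE_mul_exp_neg_mul_norm _ _ hz, Real.sq_sqrt hk.le] at hlap
  have hv_radial : 0 ≤ 2 * c / ‖z‖ * v z := by positivity
  nlinarith [hw_sub z hzR, mul_pos hk hz_pos]

theorem exponential_decay_comparison
    (a ω R C'' : ℝ) (ha : |ω| < a) (hω : 0 ≤ |ω|) (hR : 0 < R) (hC : 0 < C'')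
    (w : EuclideanSpace ℝ (Fin 3) → ℝ)
    (hw_cont : Continuous w)
    (hw_nonneg : ∀ x, 0 ≤ w x)
    (hw_C2 : ContDiffOn ℝ 2 w {x | R < ‖x‖})
    (hw_sub : ∀ x, R < ‖x‖ → (a ^ 2 - ω ^ 2) * w x ≤ lapE w x)
    (hw_decay : Tendsto w (Bornology.cobounded _) (nhds 0))
    (hw_bdry : ∀ x, ‖x‖ = R → w x ≤ C'' * Real.exp (-(Real.sqrt (a ^ 2 - ω ^ 2)) * ‖x‖)) :
    ∀ x, R ≤ ‖x‖ → w x ≤ C'' * Real.exp (-(Real.sqrt (a ^ 2 - ω ^ 2)) * ‖x‖) :=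
  exponential_decay_comparison_general a ω R C'' ha hR hC w hw_cont hw_C2 hw_sub hw_decay hw_bdry
end
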